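/- arXiv:2603.07280 — 4 statements merged into one kernel-verified Lean document; each statement's English description precedes it below -/
import Mathlib

section
/- Let u be the standard basis vector of the one-dimensional F_2-vector space F_2, and let e_{p,q} ∈ F_2^{2×2} denote the standard basis matrices. The tensor T_2 = u ⊗ e_{0,0} ⊗ e_{0,1} + u ⊗ e_{0,1} ⊗ e_{1,1} + u ⊗ e_{1,0} ⊗ e_{0,0} + u ⊗ e_{1,1} ⊗ e_{1,0} ∈ F_2 ⊗ F_2^{2×2} ⊗ F_2^{2×2} has tensor rank at least 4. (This is the 2×2 matrix multiplication tensor restricted to first matrices A = [[0,a_{0,1}],[a_{0,1},0]].) -/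
open TensorProduct

/-- The standard basis matrix of `F_2^{2×2}` with a `1` in position `(p,q)`. -/
def e (p q : Fin 2) : Matrix (Fin 2) (Fin 2) (ZMod 2) :=
  Matrix.single p q 1

namespace T2Aux

abbrev F2 := ZMod 2
abbrev M2 := Matrix (Fin 2) (Fin 2) F2
abbrev M4 := Matrix (Fin 2 × Fin 2) (Fin 2 × Fin 2) F2

/-- Flattening of a 2×2 matrix to a vector. -/
def flat : M2 →ₗ[F2] (Fin 2 × Fin 2 → F2) where
  toFun v p := v p.1 p.2
  map_add' _ _ := rfl
  map_smul' _ _ := rfl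

/-- Bilinear map sending `(v, w)` to the rank-one matrix `flat v ⬝ (flat w)ᵀ`. -/
def bil : M2 →ₗ[F2] M2 →ₗ[F2] M4 :=
  LinearMap.mk₂ F2 (fun v w => Matrix.vecMulVec (flat v) (flat w))
    (by intros; ext i j; simp [Matrix.vecMulVec_apply, map_add, add_mul])
    (by intros; ext i j; simp [Matrix.vecMulVec_apply, map_smul, mul_assoc])
    (by intros; ext i j; simp [Matrix.vecMulVec_apply, map_add, mul_add])
    (by intros; ext i j; simp [Matrix.vecMulVec_apply, map_smul, mul_left_comm, mul_assoc])

/-- The full linear map `F2 ⊗ (M2 ⊗ M2) →ₗ M4`. -/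
noncomputable def psi : (F2 ⊗[F2] (M2 ⊗[F2] M2)) →ₗ[F2] M4 :=
  TensorProduct.lift ((LinearMap.ringLmapEquivSelf F2 F2
    ((M2 ⊗[F2] M2) →ₗ[F2] M4)).symm (TensorProduct.lift bil))

@[simp] lemma psi_tmul (a : F2) (v w : M2) :
    psi (a ⊗ₜ[F2] (v ⊗ₜ[F2] w)) = a • Matrix.vecMulVec (flat v) (flat w) := by
  simp [psi, bil]

lemma rank_add_le (A B : M4) : (A + B).rank ≤ A.rank + B.rank := by
  rw [Matrix.rank, Matrix.rank, Matrix.rank, Matrix.mulVecLin_add]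
  refine le_trans (Submodule.finrank_mono ?_)
    (Submodule.finrank_add_le_finrank_add_finrank _ _)
  rintro x ⟨y, rfl⟩
  exact Submodule.add_mem_sup ⟨y, rfl⟩ ⟨y, rfl⟩

lemma rank_vmv_le (x y : Fin 2 × Fin 2 → F2) : (Matrix.vecMulVec x y).rank ≤ 1 := by
  rw [Matrix.vecMulVec_eq (Fin 1)]
  exact le_trans (Matrix.rank_mul_le_left _ _)
    (le_trans (Matrix.rank_le_card_width _) (by simp))

lemma rank_smul_vmv_le (a : F2) (x y : Fin 2 × Fin 2 → F2) :
    (a • Matrix.vecMulVec x y).rank ≤ 1 := by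
  have : a • Matrix.vecMulVec x y = Matrix.vecMulVec (a • x) y := by
    ext i j; simp [Matrix.vecMulVec_apply, mul_assoc]
  rw [this]; exact rank_vmv_le _ _

lemma rank_sum_le {r : ℕ} (f : Fin r → M4) (hf : ∀ t, (f t).rank ≤ 1) :
    (∑ t, f t).rank ≤ r := by
  classical
  have : ∀ (s : Finset (Fin r)), (∑ t ∈ s, f t).rank ≤ s.card := by
    intro s
    induction s using Finset.induction with
    | empty => simp [Matrix.rank_zero]
    | @insert a s hs ih =>
      rw [Finset.sum_insert hs, Finset.card_insert_of_notMem hs]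
      have h1 := hf a
      exact le_trans (rank_add_le _ _) (by omega)
  simpa [Finset.card_univ] using this Finset.univ

end T2Aux

/-- `T₂ = u ⊗ e₀₀ ⊗ e₀₁ + u ⊗ e₀₁ ⊗ e₁₁ + u ⊗ e₁₀ ⊗ e₀₀ + u ⊗ e₁₁ ⊗ e₁₀` has
tensor rank at least 4. -/
theorem rank_T2_ge_four (r : ℕ)
    (u : Fin r → ZMod 2)
    (v w : Fin r → Matrix (Fin 2) (Fin 2) (ZMod 2))
    (h : (1 : ZMod 2) ⊗ₜ[ZMod 2] (e 0 0 ⊗ₜ[ZMod 2] e 0 1)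
        + (1 : ZMod 2) ⊗ₜ[ZMod 2] (e 0 1 ⊗ₜ[ZMod 2] e 1 1)
        + (1 : ZMod 2) ⊗ₜ[ZMod 2] (e 1 0 ⊗ₜ[ZMod 2] e 0 0)
        + (1 : ZMod 2) ⊗ₜ[ZMod 2] (e 1 1 ⊗ₜ[ZMod 2] e 1 0)
      = ∑ t : Fin r, u t ⊗ₜ[ZMod 2] (v t ⊗ₜ[ZMod 2] w t)) :
    4 ≤ r := by
  classical
  open T2Aux in
  have happ := congrArg T2Aux.psi h
  rw [map_add, map_add, map_add, map_sum] at happ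
  simp only [T2Aux.psi_tmul, one_smul] at happ
  set A : T2Aux.M4 := Matrix.vecMulVec (T2Aux.flat (e 0 0)) (T2Aux.flat (e 0 1))
      + Matrix.vecMulVec (T2Aux.flat (e 0 1)) (T2Aux.flat (e 1 1))
      + Matrix.vecMulVec (T2Aux.flat (e 1 0)) (T2Aux.flat (e 0 0))
      + Matrix.vecMulVec (T2Aux.flat (e 1 1)) (T2Aux.flat (e 1 0)) with hA
  have h1 : A * Matrix.transpose A = 1 := by rw [hA]; decide
  have h2 : Matrix.transpose A * A = 1 := by rw [hA]; decide
  have hunit : IsUnit A := ⟨⟨A, Matrix.transpose A, h1, h2⟩, rfl⟩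
  have h4 : A.rank = 4 := by
    rw [Matrix.rank_of_isUnit A hunit]; rfl
  have hle : A.rank ≤ r := by
    rw [happ]
    exact T2Aux.rank_sum_le _ (fun t => T2Aux.rank_smul_vmv_le _ _ _)
  omega
end

section
/- Let u_0, u_1 be the standard basis vectors of the F_2-vector space F_2^2, and let e_{p,q} ∈ F_2^{2×2} denote the standard basis matrices. The tensor T_3 = u_0 ⊗ e_{0,0} ⊗ e_{0,1} + u_0 ⊗ e_{0,1} ⊗ e_{1,1} + u_1 ⊗ e_{1,0} ⊗ e_{0,1} + u_1 ⊗ e_{1,1} ⊗ e_{1,1} ∈ F_2^2 ⊗ F_2^{2×2} ⊗ F_2^{2×2} has tensor rank at least 4. (This is the 2×2 matrix multiplication tensor restricted to first matrices A = [[0,0],[a_{1,0},a_{1,1}]].) -/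
open TensorProduct

/-- The standard basis vectors of `F_2^2`. -/
def u (i : Fin 2) : Fin 2 → ZMod 2 := Pi.single i 1

/-- Linear map extracting the `(p,q)` entry of a matrix. -/
def ent (p q : Fin 2) : Matrix (Fin 2) (Fin 2) (ZMod 2) →ₗ[ZMod 2] ZMod 2 where
  toFun M := M p q
  map_add' := by intros; rfl
  map_smul' := by intros; rfl

/-- Coefficient functional of the triple tensor product at index `(i, (p,q), (s,t))`. -/
noncomputable def coeff (i p q s t : Fin 2) :
    (Fin 2 → ZMod 2) ⊗[ZMod 2]
      (Matrix (Fin 2) (Fin 2) (ZMod 2) ⊗[ZMod 2] Matrix (Fin 2) (Fin 2) (ZMod 2))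
      →ₗ[ZMod 2] ZMod 2 :=
  TensorProduct.lift
    (((LinearMap.mul (ZMod 2) (ZMod 2)).comp (LinearMap.proj i)).compl₂
      (TensorProduct.lift
        (((LinearMap.mul (ZMod 2) (ZMod 2)).comp (ent p q)).compl₂ (ent s t))))

lemma coeff_tmul (i p q s t : Fin 2) (x : Fin 2 → ZMod 2)
    (M N : Matrix (Fin 2) (Fin 2) (ZMod 2)) :
    coeff i p q s t (x ⊗ₜ[ZMod 2] (M ⊗ₜ[ZMod 2] N)) = x i * (M p q * N s t) := by
  simp [coeff, ent]
  exact Or.inl rfl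

/-- `T₃ = u₀ ⊗ e₀₀ ⊗ e₀₁ + u₀ ⊗ e₀₁ ⊗ e₁₁ + u₁ ⊗ e₁₀ ⊗ e₀₁ + u₁ ⊗ e₁₁ ⊗ e₁₁` has
tensor rank at least 4. -/
theorem rank_T3_ge_four (r : ℕ)
    (a : Fin r → (Fin 2 → ZMod 2))
    (v w : Fin r → Matrix (Fin 2) (Fin 2) (ZMod 2))
    (h : u 0 ⊗ₜ[ZMod 2] (e 0 0 ⊗ₜ[ZMod 2] e 0 1)
        + u 0 ⊗ₜ[ZMod 2] (e 0 1 ⊗ₜ[ZMod 2] e 1 1)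
        + u 1 ⊗ₜ[ZMod 2] (e 1 0 ⊗ₜ[ZMod 2] e 0 1)
        + u 1 ⊗ₜ[ZMod 2] (e 1 1 ⊗ₜ[ZMod 2] e 1 1)
      = ∑ t : Fin r, a t ⊗ₜ[ZMod 2] (v t ⊗ₜ[ZMod 2] w t)) :
    4 ≤ r := by
  classical
  -- the middle-factor vectors
  set x : Fin r → (Fin 2 × Fin 2 → ZMod 2) := fun t pq => v t pq.1 pq.2 with hx
  have key : ∀ i s : Fin 2, (Pi.single (i, s) 1 : Fin 2 × Fin 2 → ZMod 2)
      = ∑ t, (a t i * w t s 1) • x t := by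
    intro i s
    funext pq
    obtain ⟨p, q⟩ := pq
    have h' := congrArg (coeff i p q s 1) h
    simp only [map_add, map_sum, coeff_tmul] at h'
    have lhsval : u 0 i * (e 0 0 p q * e 0 1 s 1) + u 0 i * (e 0 1 p q * e 1 1 s 1)
        + u 1 i * (e 1 0 p q * e 0 1 s 1) + u 1 i * (e 1 1 p q * e 1 1 s 1)
        = (Pi.single (i, s) 1 : Fin 2 × Fin 2 → ZMod 2) (p, q) := by
      fin_cases i <;> fin_cases s <;> fin_cases p <;> fin_cases q <;> decide
    rw [Finset.sum_apply]
    simp only [Pi.smul_apply, smul_eq_mul]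
    have : ∑ t, (a t i * w t s 1) * x t (p, q) = ∑ t, a t i * (v t p q * w t s 1) :=
      Finset.sum_congr rfl (by intros; simp only [hx]; ring)
    rw [this, ← h', lhsval]
  have hspan : Submodule.span (ZMod 2) (Set.range x) = ⊤ := by
    rw [eq_top_iff]
    rintro y -
    have hy : y = ∑ j : Fin 2 × Fin 2, y j • (Pi.single j 1 : Fin 2 × Fin 2 → ZMod 2) := by
      funext k
      simp [Pi.single_apply, Finset.sum_ite_eq', mul_comm]
    rw [hy]
    refine Submodule.sum_mem _ fun j _ => Submodule.smul_mem _ _ ?_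
    obtain ⟨i, s⟩ := j
    rw [key i s]
    exact Submodule.sum_mem _ fun t _ =>
      Submodule.smul_mem _ _ (Submodule.subset_span ⟨t, rfl⟩)
  have h4 : Module.finrank (ZMod 2) (Fin 2 × Fin 2 → ZMod 2) = 4 := by
    simp [Module.finrank_pi]
  have := finrank_le_of_span_eq_top hspan
  rwa [h4, Fintype.card_fin] at this
end

section
/- Let u_0, u_1 be the standard basis vectors of the F_2-vector space F_2^2, and let e_{p,q} ∈ F_2^{2×2} denote the standard basis matrices. The tensor T_4 = u_0 ⊗ e_{0,0} ⊗ e_{0,1} + u_0 ⊗ e_{0,1} ⊗ e_{1,1} + u_0 ⊗ e_{1,0} ⊗ e_{0,0} + u_0 ⊗ e_{1,1} ⊗ e_{1,0} + u_1 ⊗ e_{1,0} ⊗ e_{0,1} + u_1 ⊗ e_{1,1} ⊗ e_{1,1} ∈ F_2^2 ⊗ F_2^{2×2} ⊗ F_2^{2×2} has tensor rank at least 6. (This is the 2×2 matrix multiplication tensor restricted to first matrices A = [[0,a_{0,1}],[a_{0,1},a_{1,1}]].) -/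
open TensorProduct Finset

/- ### Auxiliary machinery -/

lemma f2cases (x : ZMod 2) : x = 0 ∨ x = 1 := by revert x; decide

lemma f2add {x y : ZMod 2} (h : 0 = x + y) : x = y := by revert h; revert x y; decide

lemma fun_eq_zero (K : Fin 2 → Fin 2 → ZMod 2) (h1 : K 0 0 = 0) (h2 : K 0 1 = 0)
    (h3 : K 1 0 = 0) (h4 : K 1 1 = 0) : K = 0 := by
  funext k l
  fin_cases k <;> fin_cases l <;> assumption

noncomputable def φ2 (i j k l : Fin 2) :
    (Matrix (Fin 2) (Fin 2) (ZMod 2)) ⊗[ZMod 2] (Matrix (Fin 2) (Fin 2) (ZMod 2)) →ₗ[ZMod 2] ZMod 2 :=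
  TensorProduct.lift (LinearMap.mk₂ (ZMod 2) (fun A B => A i j * B k l)
    (by intros; simp [Matrix.add_apply, add_mul])
    (by intros; simp [Matrix.smul_apply, smul_eq_mul, mul_assoc])
    (by intros; simp [Matrix.add_apply, mul_add])
    (by intros; simp [Matrix.smul_apply, smul_eq_mul]; ring))

noncomputable def φ (s i j k l : Fin 2) :
    (Fin 2 → ZMod 2) ⊗[ZMod 2] ((Matrix (Fin 2) (Fin 2) (ZMod 2)) ⊗[ZMod 2]
      (Matrix (Fin 2) (Fin 2) (ZMod 2))) →ₗ[ZMod 2] ZMod 2 :=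
  TensorProduct.lift (LinearMap.mk₂ (ZMod 2) (fun x y => x s * φ2 i j k l y)
    (by intros; simp [Pi.add_apply, add_mul])
    (by intros; simp [Pi.smul_apply, smul_eq_mul, mul_assoc])
    (by intros; simp [map_add, mul_add])
    (by intros; simp [map_smul, smul_eq_mul]; ring))

/-- The coefficients of the tensor `T₄`. -/
def Tc (s i j k l : Fin 2) : ZMod 2 :=
  u 0 s * (e 0 0 i j * e 0 1 k l) + u 0 s * (e 0 1 i j * e 1 1 k l)
  + u 0 s * (e 1 0 i j * e 0 0 k l) + u 0 s * (e 1 1 i j * e 1 0 k l)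
  + u 1 s * (e 1 0 i j * e 0 1 k l) + u 1 s * (e 1 1 i j * e 1 1 k l)

/-- A 4-dimensional "dot product" on 2×2 index arrays. -/
def Dot (W K : Fin 2 → Fin 2 → ZMod 2) : ZMod 2 :=
  W 0 0 * K 0 0 + W 0 1 * K 0 1 + W 1 0 * K 1 0 + W 1 1 * K 1 1

/-- the slice `Tc 1` (the matrix `M₁`) is not of rank ≤ 1. -/
lemma rankone (x y : Fin 2 → Fin 2 → ZMod 2)
    (h : ∀ i j k l, Tc 1 i j k l = x i j * y k l) : False := by
  revert h; revert x y; decide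

/-- at most 3 vectors in `F_2^4` have a common nonzero annihilator. -/
lemma exists_ker {r : ℕ} (S : Finset (Fin r)) (hS : S.card ≤ 3)
    (f : Fin r → Fin 2 → Fin 2 → ZMod 2) :
    ∃ K : Fin 2 → Fin 2 → ZMod 2, K ≠ 0 ∧ ∀ t ∈ S, Dot (f t) K = 0 := by
  set L : (Fin 2 → Fin 2 → ZMod 2) → (S → ZMod 2) :=
    fun K t => Dot (f t.1) K with hL
  have hni : ¬ Function.Injective L := by
    intro hinj
    have hc := Fintype.card_le_of_injective L hinj
    have h1 : Fintype.card (Fin 2 → Fin 2 → ZMod 2) = 16 := by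
      simp [Fintype.card_fun]
    have h2 : Fintype.card (S → ZMod 2) = 2 ^ S.card := by
      simp [Fintype.card_fun]
    rw [h1, h2] at hc
    have : (2:ℕ) ^ S.card ≤ 2 ^ 3 := Nat.pow_le_pow_right (by norm_num) hS
    omega
  obtain ⟨K1, K2, heq, hne⟩ := Function.not_injective_iff.mp hni
  refine ⟨K1 - K2, sub_ne_zero.mpr hne, ?_⟩
  intro t ht
  have h3 : L K1 ⟨t, ht⟩ = L K2 ⟨t, ht⟩ := by rw [heq]
  simp only [hL] at h3
  have h4 : Dot (f t) (K1 - K2) = Dot (f t) K1 - Dot (f t) K2 := by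
    simp only [Dot, Pi.sub_apply]; ring
  rw [h4, h3, sub_self]

/-- If a slice has an injective coefficient matrix, at least 4 rank-one
terms contribute to it. -/
lemma slice_ge {r : ℕ} (g : Fin r → ZMod 2) (v w : Fin r → Matrix (Fin 2) (Fin 2) (ZMod 2))
    (F : Fin 2 → Fin 2 → Fin 2 → Fin 2 → ZMod 2)
    (hkey : ∀ i j k l, F i j k l = ∑ t, g t * (v t i j * w t k l))
    (hinv : ∀ K : Fin 2 → Fin 2 → ZMod 2,
      (∀ i j, F i j 0 0 * K 0 0 + F i j 0 1 * K 0 1 + F i j 1 0 * K 1 0 + F i j 1 1 * K 1 1 = 0)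
        → K = 0) :
    4 ≤ (univ.filter (fun t => g t = 1)).card := by
  by_contra hlt
  push_neg at hlt
  obtain ⟨K, hK0, hker⟩ := exists_ker (univ.filter fun t => g t = 1) (by omega) (fun t => w t)
  apply hK0
  apply hinv
  intro i j
  rw [hkey, hkey, hkey, hkey, Finset.sum_mul, Finset.sum_mul, Finset.sum_mul, Finset.sum_mul,
    ← Finset.sum_add_distrib, ← Finset.sum_add_distrib, ← Finset.sum_add_distrib]
  apply Finset.sum_eq_zero
  intro t _
  rcases f2cases (g t) with h | h
  · rw [h]; ring
  · have hd : Dot (w t) K = 0 := hker t (by simp [h])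
    have : g t * (v t i j * w t 0 0) * K 0 0 + g t * (v t i j * w t 0 1) * K 0 1
        + g t * (v t i j * w t 1 0) * K 1 0 + g t * (v t i j * w t 1 1) * K 1 1
        = g t * v t i j * Dot (w t) K := by simp only [Dot]; ring
    rw [this, hd, mul_zero]

/-- `T₄ = u₀⊗e₀₀⊗e₀₁ + u₀⊗e₀₁⊗e₁₁ + u₀⊗e₁₀⊗e₀₀ + u₀⊗e₁₁⊗e₁₀ + u₁⊗e₁₀⊗e₀₁ + u₁⊗e₁₁⊗e₁₁`
has tensor rank at least 6. -/
theorem rank_T4_ge_six (r : ℕ)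
    (a : Fin r → (Fin 2 → ZMod 2))
    (v w : Fin r → Matrix (Fin 2) (Fin 2) (ZMod 2))
    (h : u 0 ⊗ₜ[ZMod 2] (e 0 0 ⊗ₜ[ZMod 2] e 0 1)
        + u 0 ⊗ₜ[ZMod 2] (e 0 1 ⊗ₜ[ZMod 2] e 1 1)
        + u 0 ⊗ₜ[ZMod 2] (e 1 0 ⊗ₜ[ZMod 2] e 0 0)
        + u 0 ⊗ₜ[ZMod 2] (e 1 1 ⊗ₜ[ZMod 2] e 1 0)
        + u 1 ⊗ₜ[ZMod 2] (e 1 0 ⊗ₜ[ZMod 2] e 0 1)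
        + u 1 ⊗ₜ[ZMod 2] (e 1 1 ⊗ₜ[ZMod 2] e 1 1)
      = ∑ t : Fin r, a t ⊗ₜ[ZMod 2] (v t ⊗ₜ[ZMod 2] w t)) :
    6 ≤ r := by
  by_contra hr
  push_neg at hr
  have hr5 : r ≤ 5 := by omega
  clear hr
  -- extract scalar equations
  have key : ∀ s i j k l, Tc s i j k l = ∑ t, a t s * (v t i j * w t k l) := by
    intro s i j k l
    have h2 := congrArg (φ s i j k l) h
    simp only [map_add, map_sum, φ, φ2, TensorProduct.lift.tmul, LinearMap.mk₂_apply] at h2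
    exact h2
  have keyD : ∀ i j k l, Tc 0 i j k l + Tc 1 i j k l
      = ∑ t, (a t 0 + a t 1) * (v t i j * w t k l) := by
    intro i j k l
    rw [key 0, key 1, ← Finset.sum_add_distrib]
    exact Finset.sum_congr rfl fun t _ => by ring
  -- the three classes of coefficient vectors
  set S0 : Finset (Fin r) := univ.filter (fun t => a t 0 = 1 ∧ a t 1 = 0) with hS0def
  set S1 : Finset (Fin r) := univ.filter (fun t => a t 0 = 0 ∧ a t 1 = 1) with hS1def
  set S2 : Finset (Fin r) := univ.filter (fun t => a t 0 = 1 ∧ a t 1 = 1) with hS2def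
  have hd01 : Disjoint S0 S1 := by
    rw [Finset.disjoint_left]
    intro t ht1 ht2
    rw [hS0def, mem_filter] at ht1; rw [hS1def, mem_filter] at ht2
    exact one_ne_zero (ht2.2.2.symm.trans ht1.2.2)
  have hd02 : Disjoint S0 S2 := by
    rw [Finset.disjoint_left]
    intro t ht1 ht2
    rw [hS0def, mem_filter] at ht1; rw [hS2def, mem_filter] at ht2
    exact one_ne_zero (ht2.2.2.symm.trans ht1.2.2)
  have hd12 : Disjoint S1 S2 := by
    rw [Finset.disjoint_left]
    intro t ht1 ht2
    rw [hS1def, mem_filter] at ht1; rw [hS2def, mem_filter] at ht2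
    exact one_ne_zero (ht2.2.1.symm.trans ht1.2.1)
  -- slice lower bounds
  have hM0 : 4 ≤ (univ.filter (fun t => a t 0 = 1)).card := by
    apply slice_ge (fun t => a t 0) v w (fun i j k l => Tc 0 i j k l) (key 0)
    intro K hK; revert hK; revert K; decide
  have hMD : 4 ≤ (univ.filter (fun t => a t 0 + a t 1 = 1)).card := by
    apply slice_ge (fun t => a t 0 + a t 1) v w (fun i j k l => Tc 0 i j k l + Tc 1 i j k l) keyD
    intro K hK; revert hK; revert K; decide
  have hM1 : 2 ≤ (univ.filter (fun t => a t 1 = 1)).card := by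
    by_contra hlt
    push_neg at hlt
    interval_cases hc : (univ.filter (fun t => a t 1 = 1)).card
    · have hemp : ∀ t : Fin r, a t 1 = 0 := by
        intro t
        rcases f2cases (a t 1) with h' | h'
        · exact h'
        · exfalso
          have : t ∈ univ.filter (fun t => a t 1 = 1) := by simp [h']
          rw [Finset.card_eq_zero.mp hc] at this
          exact absurd this (Finset.notMem_empty t)
      have h1 := key 1 1 0 0 1
      rw [Finset.sum_eq_zero (fun t _ => by rw [hemp t]; ring)] at h1
      have : Tc 1 1 0 0 1 = 1 := by decide
      rw [this] at h1; exact one_ne_zero h1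
    · obtain ⟨q, hq⟩ := Finset.card_eq_one.mp hc
      have hq1 : a q 1 = 1 := by
        have : q ∈ univ.filter (fun t => a t 1 = 1) := by rw [hq]; exact mem_singleton_self q
        exact (mem_filter.mp this).2
      apply rankone (v q) (w q)
      intro i j k l
      rw [key 1 i j k l, Fintype.sum_eq_single q, hq1, one_mul]
      intro t ht
      rcases f2cases (a t 1) with h' | h'
      · rw [h']; ring
      · exfalso
        have : t ∈ univ.filter (fun t => a t 1 = 1) := by simp [h']
        rw [hq, mem_singleton] at this; exact ht this
  -- counting
  have hsplit0 : univ.filter (fun t => a t 0 = 1) = S0 ∪ S2 := by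
    ext t
    simp only [mem_filter, mem_union, hS0def, hS2def, mem_univ, true_and]
    rcases f2cases (a t 1) with h' | h' <;> simp [h']
  have hsplit1 : univ.filter (fun t => a t 1 = 1) = S1 ∪ S2 := by
    ext t
    simp only [mem_filter, mem_union, hS1def, hS2def, mem_univ, true_and]
    rcases f2cases (a t 0) with h' | h' <;> simp [h']
  have hsplitD : univ.filter (fun t => a t 0 + a t 1 = 1) = S0 ∪ S1 := by
    ext t
    simp only [mem_filter, mem_union, hS0def, hS1def, mem_univ, true_and]
    have : ∀ x y : ZMod 2, x + y = 1 ↔ ((x = 1 ∧ y = 0) ∨ (x = 0 ∧ y = 1)) := by decide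
    exact this _ _
  rw [hsplit0, Finset.card_union_of_disjoint hd02] at hM0
  rw [hsplit1, Finset.card_union_of_disjoint hd12] at hM1
  rw [hsplitD, Finset.card_union_of_disjoint hd01] at hMD
  have htot : S0.card + S1.card + S2.card ≤ r := by
    have h1 : (S0 ∪ S1 ∪ S2).card ≤ r := by
      have := Finset.card_le_univ (S0 ∪ S1 ∪ S2)
      simpa using this
    rwa [Finset.card_union_of_disjoint (by
        rw [Finset.disjoint_union_left]; exact ⟨hd02, hd12⟩),
      Finset.card_union_of_disjoint hd01] at h1
  have hn0 : S0.card = 3 := by omega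
  have hn1 : S1.card = 1 := by omega
  have hn2 : S2.card = 1 := by omega
  obtain ⟨p, hp⟩ := Finset.card_eq_one.mp hn2
  obtain ⟨q, hq⟩ := Finset.card_eq_one.mp hn1
  have hpmem : p ∈ S2 := by rw [hp]; exact mem_singleton_self p
  have hqmem : q ∈ S1 := by rw [hq]; exact mem_singleton_self q
  have hp0 : a p 0 = 1 := ((mem_filter.mp hpmem).2).1
  have hp1 : a p 1 = 1 := ((mem_filter.mp hpmem).2).2
  have hq0 : a q 0 = 0 := ((mem_filter.mp hqmem).2).1
  have hq1 : a q 1 = 1 := ((mem_filter.mp hqmem).2).2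
  have hpq : p ≠ q := by
    intro hh; rw [hh, hq0] at hp0; exact one_ne_zero hp0.symm
  -- kernel vector of the three S0 rows
  obtain ⟨K, hK0, hker⟩ := exists_ker S0 (by omega) (fun t => w t)
  -- the M0 slice applied to K
  have step7 : ∀ i j, Tc 0 i j 0 0 * K 0 0 + Tc 0 i j 0 1 * K 0 1
      + Tc 0 i j 1 0 * K 1 0 + Tc 0 i j 1 1 * K 1 1 = v p i j * Dot (w p) K := by
    intro i j
    rw [key 0, key 0, key 0, key 0, Finset.sum_mul, Finset.sum_mul, Finset.sum_mul,
      Finset.sum_mul, ← Finset.sum_add_distrib, ← Finset.sum_add_distrib,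
      ← Finset.sum_add_distrib]
    rw [Fintype.sum_eq_single p]
    · rw [hp0]
      simp only [Dot]; ring
    · intro t ht
      rcases f2cases (a t 0) with h' | h'
      · rw [h']; ring
      · rcases f2cases (a t 1) with h'' | h''
        · have hmem : t ∈ S0 := by simp [hS0def, h', h'']
          have hd : Dot (w t) K = 0 := hker t hmem
          have : a t 0 * (v t i j * w t 0 0) * K 0 0 + a t 0 * (v t i j * w t 0 1) * K 0 1
              + a t 0 * (v t i j * w t 1 0) * K 1 0 + a t 0 * (v t i j * w t 1 1) * K 1 1
              = a t 0 * v t i j * Dot (w t) K := by simp only [Dot]; ring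
          rw [this, hd, mul_zero]
        · exfalso
          have : t ∈ S2 := by simp [hS2def, h', h'']
          rw [hp, mem_singleton] at this; exact ht this
  set E := Dot (w p) K with hE
  -- evaluate step7 at the four rows
  have e1 : K 0 1 = v p 0 0 * E := by
    have hx := step7 0 0
    rw [show Tc 0 0 0 0 0 = 0 by decide, show Tc 0 0 0 0 1 = 1 by decide,
      show Tc 0 0 0 1 0 = 0 by decide, show Tc 0 0 0 1 1 = 0 by decide] at hx
    linear_combination hx
  have e2 : K 1 1 = v p 0 1 * E := by
    have hx := step7 0 1
    rw [show Tc 0 0 1 0 0 = 0 by decide, show Tc 0 0 1 0 1 = 0 by decide,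
      show Tc 0 0 1 1 0 = 0 by decide, show Tc 0 0 1 1 1 = 1 by decide] at hx
    linear_combination hx
  have e3 : K 0 0 = v p 1 0 * E := by
    have hx := step7 1 0
    rw [show Tc 0 1 0 0 0 = 1 by decide, show Tc 0 1 0 0 1 = 0 by decide,
      show Tc 0 1 0 1 0 = 0 by decide, show Tc 0 1 0 1 1 = 0 by decide] at hx
    linear_combination hx
  have e4 : K 1 0 = v p 1 1 * E := by
    have hx := step7 1 1
    rw [show Tc 0 1 1 0 0 = 0 by decide, show Tc 0 1 1 0 1 = 0 by decide,
      show Tc 0 1 1 1 0 = 1 by decide, show Tc 0 1 1 1 1 = 0 by decide] at hx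
    linear_combination hx
  have hE1 : E = 1 := by
    rcases f2cases E with h' | h'
    · exfalso
      apply hK0
      exact fun_eq_zero K (by rw [e3, h', mul_zero]) (by rw [e1, h', mul_zero])
        (by rw [e4, h', mul_zero]) (by rw [e2, h', mul_zero])
    · exact h'
  -- the M1 slice has exactly two terms
  have key1pair : ∀ i j k l, Tc 1 i j k l = v p i j * w p k l + v q i j * w q k l := by
    intro i j k l
    rw [key 1 i j k l, Fintype.sum_eq_add p q hpq]
    · rw [hp1, hq1]; ring
    · intro t ⟨htp, htq⟩
      rcases f2cases (a t 1) with h' | h'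
      · rw [h']; ring
      · exfalso
        rcases f2cases (a t 0) with h'' | h''
        · have : t ∈ S1 := by simp [hS1def, h', h'']
          rw [hq, mem_singleton] at this; exact htq this
        · have : t ∈ S2 := by simp [hS2def, h', h'']
          rw [hp, mem_singleton] at this; exact htp this
  -- v p vanishes on the first row, w p on the first column
  have hv00 : v p 0 0 = 0 := by
    rcases f2cases (v p 0 0) with h' | h'
    · exact h'
    exfalso
    have hrow : ∀ k l, w p k l = v q 0 0 * w q k l := by
      intro k l
      have := key1pair 0 0 k l
      rw [show ∀ k l, Tc 1 0 0 k l = 0 from by decide, h', one_mul] at this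
      exact f2add this
    rcases f2cases (v q 0 0) with h'' | h''
    · apply rankone (v q) (w q)
      intro i j k l
      have h5 := hrow k l; rw [h''] at h5
      rw [key1pair]; rw [h5]; ring
    · apply rankone (fun i j => v p i j + v q i j) (w p)
      intro i j k l
      have h5 := hrow k l; rw [h''] at h5
      rw [key1pair, h5]; ring
  have hv01 : v p 0 1 = 0 := by
    rcases f2cases (v p 0 1) with h' | h'
    · exact h'
    exfalso
    have hrow : ∀ k l, w p k l = v q 0 1 * w q k l := by
      intro k l
      have := key1pair 0 1 k l
      rw [show ∀ k l, Tc 1 0 1 k l = 0 from by decide, h', one_mul] at this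
      exact f2add this
    rcases f2cases (v q 0 1) with h'' | h''
    · apply rankone (v q) (w q)
      intro i j k l
      have h5 := hrow k l; rw [h''] at h5
      rw [key1pair]; rw [h5]; ring
    · apply rankone (fun i j => v p i j + v q i j) (w p)
      intro i j k l
      have h5 := hrow k l; rw [h''] at h5
      rw [key1pair, h5]; ring
  have hw00 : w p 0 0 = 0 := by
    rcases f2cases (w p 0 0) with h' | h'
    · exact h'
    exfalso
    have hcol : ∀ i j, v p i j = v q i j * w q 0 0 := by
      intro i j
      have := key1pair i j 0 0
      rw [show ∀ i j, Tc 1 i j 0 0 = 0 from by decide, h', mul_one] at this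
      exact f2add this
    rcases f2cases (w q 0 0) with h'' | h''
    · apply rankone (v q) (w q)
      intro i j k l
      have h5 := hcol i j; rw [h''] at h5
      rw [key1pair, h5]; ring
    · apply rankone (v q) (fun k l => w p k l + w q k l)
      intro i j k l
      have h5 := hcol i j; rw [h''] at h5
      rw [key1pair, h5]; ring
  have hw10 : w p 1 0 = 0 := by
    rcases f2cases (w p 1 0) with h' | h'
    · exact h'
    exfalso
    have hcol : ∀ i j, v p i j = v q i j * w q 1 0 := by
      intro i j
      have := key1pair i j 1 0
      rw [show ∀ i j, Tc 1 i j 1 0 = 0 from by decide, h', mul_one] at this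
      exact f2add this
    rcases f2cases (w q 1 0) with h'' | h''
    · apply rankone (v q) (w q)
      intro i j k l
      have h5 := hcol i j; rw [h''] at h5
      rw [key1pair, h5]; ring
    · apply rankone (v q) (fun k l => w p k l + w q k l)
      intro i j k l
      have h5 := hcol i j; rw [h''] at h5
      rw [key1pair, h5]; ring
  -- final contradiction
  have : E = 0 := by
    rw [hE]; simp only [Dot]; rw [hw00, hw10, e1, e2, hv00, hv01, hE1]
    ring
  rw [hE1] at this
  exact one_ne_zero this
end

section
/- Let u_0, u_1 be the standard basis vectors of the F_2-vector space F_2^2, and let e_{p,q} ∈ F_2^{2×2} denote the standard basis matrices. The tensor T_5 = u_0 ⊗ e_{1,0} ⊗ e_{0,0} + u_0 ⊗ e_{1,1} ⊗ e_{1,0} + u_1 ⊗ e_{0,0} ⊗ e_{0,1} + u_1 ⊗ e_{0,1} ⊗ e_{1,1} ∈ F_2^2 ⊗ F_2^{2×2} ⊗ F_2^{2×2} has tensor rank at least 4. (This is the 2×2 matrix multiplication tensor restricted to first matrices A = [[0,a_{0,1}],[a_{1,0},0]].) -/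
open TensorProduct Matrix Module
set_option linter.unusedSectionVars false

section T5auxsec

variable {K : Type*} [Field K] {m n : Type*} [Fintype m] [Fintype n]

lemma myrank_add_le (A B : Matrix m n K) : (A + B).rank ≤ A.rank + B.rank := by
  classical
  rw [Matrix.rank, Matrix.rank, Matrix.rank, Matrix.mulVecLin_add]
  have hle : LinearMap.range (A.mulVecLin + B.mulVecLin) ≤
      LinearMap.range A.mulVecLin ⊔ LinearMap.range B.mulVecLin := by
    rintro x ⟨y, rfl⟩
    exact Submodule.mem_sup.2 ⟨A.mulVecLin y, ⟨y, rfl⟩, B.mulVecLin y, ⟨y, rfl⟩, rfl⟩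
  exact (Submodule.finrank_mono hle).trans
    (Submodule.finrank_add_le_finrank_add_finrank _ _)

lemma myrank_vecMulVec_le (x : m → K) (y : n → K) : (vecMulVec x y).rank ≤ 1 := by
  classical
  rw [Matrix.rank]
  have hle : LinearMap.range (vecMulVec x y).mulVecLin ≤ K ∙ x := by
    rintro z ⟨c, rfl⟩
    refine Submodule.mem_span_singleton.2 ⟨y ⬝ᵥ c, ?_⟩
    ext i
    simp only [Matrix.mulVecLin_apply, Matrix.mulVec, vecMulVec_apply, dotProduct,
      Pi.smul_apply, smul_eq_mul]
    rw [Finset.sum_mul]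
    exact Finset.sum_congr rfl fun j _ => by ring
  refine (Submodule.finrank_mono hle).trans ?_
  by_cases hx : x = 0
  · rw [hx, Submodule.span_zero_singleton]; simp
  · rw [finrank_span_singleton hx]

lemma myrank_sum_le {ι : Type*} (s : Finset ι) (M : ι → Matrix m n K)
    (h1 : ∀ t ∈ s, (M t).rank ≤ 1) : (∑ t ∈ s, M t).rank ≤ s.card := by
  classical
  induction s using Finset.induction with
  | empty => simp [Matrix.rank_zero]
  | @insert i s hnot ih =>
    rw [Finset.sum_insert hnot, Finset.card_insert_of_notMem hnot]
    exact (myrank_add_le _ _).trans (by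
      have := ih (fun t ht => h1 t (Finset.mem_insert_of_mem ht))
      have h1' := h1 i (Finset.mem_insert_self i s)
      omega)

namespace T5aux

lemma smul_vecMulVec (c : K) (x : m → K) (y : n → K) :
    c • vecMulVec x y = vecMulVec (fun i => c * x i) y := by
  ext i j
  simp [vecMulVec_apply, mul_assoc]

noncomputable def φ : (Fin 2 → ZMod 2) →ₗ[ZMod 2] ZMod 2 :=
  (LinearMap.proj (R := ZMod 2) (φ := fun _ : Fin 2 => ZMod 2) 0) +
    (LinearMap.proj (R := ZMod 2) (φ := fun _ : Fin 2 => ZMod 2) 1)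

abbrev M2 := Matrix (Fin 2) (Fin 2) (ZMod 2)
abbrev M4 := Matrix (Fin 2 × Fin 2) (Fin 2 × Fin 2) (ZMod 2)

noncomputable def B : M2 →ₗ[ZMod 2] M2 →ₗ[ZMod 2] M4 :=
  LinearMap.mk₂ (ZMod 2)
    (fun x y => vecMulVec (fun p => x p.1 p.2) (fun q => y q.1 q.2))
    (fun x x' y => by ext p q; simp [vecMulVec_apply, add_mul])
    (fun c x y => by ext p q; simp [vecMulVec_apply, mul_assoc])
    (fun x y y' => by ext p q; simp [vecMulVec_apply, mul_add])
    (fun c x y => by ext p q; simp [vecMulVec_apply]; ring)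

noncomputable def F : (Fin 2 → ZMod 2) ⊗[ZMod 2] (M2 ⊗[ZMod 2] M2) →ₗ[ZMod 2] M4 :=
  (TensorProduct.lift B) ∘ₗ (TensorProduct.lid (ZMod 2) (M2 ⊗[ZMod 2] M2)).toLinearMap
    ∘ₗ (TensorProduct.map φ LinearMap.id)

lemma F_tmul (a : Fin 2 → ZMod 2) (x y : M2) :
    F (a ⊗ₜ[ZMod 2] (x ⊗ₜ[ZMod 2] y))
      = (a 0 + a 1) • vecMulVec (fun p : Fin 2 × Fin 2 => x p.1 p.2)
          (fun q : Fin 2 × Fin 2 => y q.1 q.2) := by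
  simp [F, φ, B, TensorProduct.lid_tmul]

end T5aux

end T5auxsec

/-- `T₅ = u₀⊗e₁₀⊗e₀₀ + u₀⊗e₁₁⊗e₁₀ + u₁⊗e₀₀⊗e₀₁ + u₁⊗e₀₁⊗e₁₁` has tensor rank
at least 4. -/
theorem rank_T5_ge_four (r : ℕ)
    (a : Fin r → (Fin 2 → ZMod 2))
    (v w : Fin r → Matrix (Fin 2) (Fin 2) (ZMod 2))
    (h : u 0 ⊗ₜ[ZMod 2] (e 1 0 ⊗ₜ[ZMod 2] e 0 0)
        + u 0 ⊗ₜ[ZMod 2] (e 1 1 ⊗ₜ[ZMod 2] e 1 0)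
        + u 1 ⊗ₜ[ZMod 2] (e 0 0 ⊗ₜ[ZMod 2] e 0 1)
        + u 1 ⊗ₜ[ZMod 2] (e 0 1 ⊗ₜ[ZMod 2] e 1 1)
      = ∑ t : Fin r, a t ⊗ₜ[ZMod 2] (v t ⊗ₜ[ZMod 2] w t)) :
    4 ≤ r := by
  classical
  have h2 := congrArg T5aux.F h
  simp only [map_add, map_sum, T5aux.F_tmul] at h2
  set P : T5aux.M4 :=
      (u 0 0 + u 0 1) • vecMulVec (fun p : Fin 2 × Fin 2 => e 1 0 p.1 p.2)
          (fun q : Fin 2 × Fin 2 => e 0 0 q.1 q.2)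
        + (u 0 0 + u 0 1) • vecMulVec (fun p : Fin 2 × Fin 2 => e 1 1 p.1 p.2)
          (fun q : Fin 2 × Fin 2 => e 1 0 q.1 q.2)
        + (u 1 0 + u 1 1) • vecMulVec (fun p : Fin 2 × Fin 2 => e 0 0 p.1 p.2)
          (fun q : Fin 2 × Fin 2 => e 0 1 q.1 q.2)
        + (u 1 0 + u 1 1) • vecMulVec (fun p : Fin 2 × Fin 2 => e 0 1 p.1 p.2)
          (fun q : Fin 2 × Fin 2 => e 1 1 q.1 q.2) with hPdef
  have hrank_le : P.rank ≤ r := by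
    rw [h2]
    refine (myrank_sum_le Finset.univ _ ?_).trans (by simp)
    intro t _
    rw [T5aux.smul_vecMulVec]
    exact myrank_vecMulVec_le _ _
  have hmul : P * Pᵀ = 1 := by rw [hPdef]; decide
  have hu : IsUnit P := (Matrix.isUnit_iff_isUnit_det P).2 (Matrix.isUnit_det_of_right_inverse hmul)
  have hrank : P.rank = 4 := by
    rw [Matrix.rank_of_isUnit P hu]
    simp
  omega
end
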